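/- arXiv:1309.4820 — 12 statements merged into one kernel-verified Lean document; each statement's English description precedes it below -/
import Mathlib

section
/- Let r, u0 be real numbers with r ≠ 1. Define sequences u0n, u1n : ℕ → ℝ by u0n(0) = u0, u0n(n+1) = u0 + r·u0n(n), and u1n(0) = 0, u1n(n+1) = r·u1n(n) + r·u0n(n)². Then for every n ≥ 0, u1n(n) = u0²·[ (−2r^(n+2) + 2r^(n+1))·n + (−r + r^(2n+2) + r^(n+1) − r^(n+2)) ] / (r−1)³. -/
/-! The zeroth-order amplitude is the geometric sum `u0 (r^(n+1) - 1) / (r - 1)`. Substituting it as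
the forcing term of the linear recursion for the first-order amplitude, the claimed closed form is
checked by induction on `n`: once the denominators `(r - 1)^k` are cleared, each step is a polynomial
identity in `r` and `n`. -/

section AffineRecurrence

variable {K : Type*} [Field K] {r a : K}

theorem eq_geom_of_affine_recurrence (hr : r ≠ 1) {u : ℕ → K} (h0 : u 0 = a)
    (hs : ∀ n, u (n + 1) = a + r * u n) (n : ℕ) :
    u n = a * (r ^ (n + 1) - 1) / (r - 1) := by
  have hr' : r - 1 ≠ 0 := sub_ne_zero.mpr hr
  induction n with
  | zero => rw [h0]; field_simp; ring
  | succ k ih => rw [hs, ih]; field_simp; ring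

theorem eq_of_recurrence_forced_by_geom_sq (hr : r ≠ 1) {v : ℕ → K} (h0 : v 0 = 0)
    (hs : ∀ n, v (n + 1) = r * v n + r * (a * (r ^ (n + 1) - 1) / (r - 1)) ^ 2) (n : ℕ) :
    v n = a ^ 2 * ((-2 * r ^ (n + 2) + 2 * r ^ (n + 1)) * (n : K) +
      (-r + r ^ (2 * n + 2) + r ^ (n + 1) - r ^ (n + 2))) / (r - 1) ^ 3 := by
  have hr' : r - 1 ≠ 0 := sub_ne_zero.mpr hr
  induction n with
  | zero => rw [h0]; field_simp; push_cast; ring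
  | succ k ih => rw [hs, ih]; field_simp; push_cast; ring

end AffineRecurrence

theorem stmt_0 (r u0 : ℝ) (hr : r ≠ 1)
    (u0n u1n : ℕ → ℝ)
    (h00 : u0n 0 = u0)
    (h0s : ∀ n : ℕ, u0n (n + 1) = u0 + r * u0n n)
    (h10 : u1n 0 = 0)
    (h1s : ∀ n : ℕ, u1n (n + 1) = r * u1n n + r * (u0n n) ^ 2) :
    ∀ n : ℕ, u1n n =
      u0 ^ 2 *
        ((-2 * r ^ (n + 2) + 2 * r ^ (n + 1)) * (n : ℝ) +
          (-r + r ^ (2 * n + 2) + r ^ (n + 1) - r ^ (n + 2))) / (r - 1) ^ 3 := by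
  have hu0n := eq_geom_of_affine_recurrence hr h00 h0s
  refine eq_of_recurrence_forced_by_geom_sq hr h10 fun n => ?_
  rw [h1s, hu0n]
end

section
/- Let r, u0 be real numbers with |r| < 1. Define u0n, u1n : ℕ → ℝ by u0n(0) = u0, u0n(n+1) = u0 + r·u0n(n), u1n(0) = 0, u1n(n+1) = r·u1n(n) + r·u0n(n)². Then u1n(n) converges as n → ∞, with limit u0²·r/(1−r)³. -/
/-!
Both sequences solve a forced linear recurrence `a (n + 1) = r • a n + f n` with `‖r‖ < 1`.
If the forcing converges, `f n → b`, then `a n → b / (1 - r)`: the deviation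
from that fixed point is contracted by `r` at every step, up to an error that tends to zero.
Applied first with `f = u0` this gives `u0n → u0 / (1 - r)`, and then with `f n = r * u0n n ^ 2`
it gives `u1n → r (u0 / (1 - r))² / (1 - r)`.
-/

open Filter Topology

theorem tendsto_zero_of_le_mul_add {q : ℝ} (hq0 : 0 ≤ q) (hq1 : q < 1) {x y : ℕ → ℝ}
    (hx : ∀ n, 0 ≤ x n) (hy : Tendsto y atTop (𝓝 0))
    (hxy : ∀ n, x (n + 1) ≤ q * x n + y n) :
    Tendsto x atTop (𝓝 0) := by
  refine tendsto_order.2 ⟨fun a ha => .of_forall fun n => ha.trans_le (hx n), fun ε hε => ?_⟩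
  obtain ⟨N, hN⟩ := eventually_atTop.1 <|
    hy.eventually (ge_mem_nhds (show 0 < (1 - q) * (ε / 2) by nlinarith))
  -- once `y ≤ (1 - q) ε / 2`, the excess of `x` over `ε / 2` shrinks by the factor `q` at each step
  have hgeom (k : ℕ) : x (N + k) - ε / 2 ≤ q ^ k * (x N - ε / 2) := by
    refine le_geom (u := fun k => x (N + k) - ε / 2) hq0 k fun j _ => ?_
    have := hxy (N + j)
    have := hN (N + j) (Nat.le_add_right N j)
    simp only [← add_assoc]
    nlinarith
  obtain ⟨K, hK⟩ := eventually_atTop.1 <|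
    ((tendsto_pow_atTop_nhds_zero_of_lt_one hq0 hq1).mul_const (x N - ε / 2)).eventually
      (gt_mem_nhds (show 0 * (x N - ε / 2) < ε / 2 by linarith))
  refine eventually_atTop.2 ⟨N + K, fun n hn => ?_⟩
  obtain ⟨k, rfl⟩ := Nat.exists_eq_add_of_le (le_of_add_le_left hn)
  linarith [hgeom k, hK k (by omega)]

section

variable {𝕜 E : Type*} [NormedField 𝕜] [NormedAddCommGroup E] [NormedSpace 𝕜 E]

theorem tendsto_zero_of_succ_eq_smul_add {r : 𝕜} (hr : ‖r‖ < 1) {e g : ℕ → E}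
    (hg : Tendsto g atTop (𝓝 0)) (he : ∀ n, e (n + 1) = r • e n + g n) :
    Tendsto e atTop (𝓝 0) := by
  refine tendsto_zero_iff_norm_tendsto_zero.2 <|
    tendsto_zero_of_le_mul_add (norm_nonneg r) hr (fun n => norm_nonneg (e n))
      (tendsto_zero_iff_norm_tendsto_zero.1 hg) fun n => ?_
  rw [he, ← norm_smul]
  exact norm_add_le _ _

theorem tendsto_of_succ_eq_smul_add {r : 𝕜} (hr : ‖r‖ < 1) {a f : ℕ → E} {b : E}
    (hf : Tendsto f atTop (𝓝 b)) (ha : ∀ n, a (n + 1) = r • a n + f n) :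
    Tendsto a atTop (𝓝 ((1 - r)⁻¹ • b)) := by
  have hr1 : 1 - r ≠ 0 := sub_ne_zero.2 fun h => by simp [← h] at hr
  set c := (1 - r)⁻¹ • b
  have hc : (1 - r) • c = b := smul_inv_smul₀ hr1 b
  have he : Tendsto (fun n => a n - c) atTop (𝓝 0) :=
    tendsto_zero_of_succ_eq_smul_add hr (tendsto_sub_nhds_zero_iff.2 hf) fun n => by
      rw [ha, ← hc, sub_smul, one_smul, smul_sub]; abel
  simpa using he.add_const c

end

theorem stmt_1_general (r u0 : ℝ) (hr : |r| < 1)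
    (u0n u1n : ℕ → ℝ)
    (h0s : ∀ n : ℕ, u0n (n + 1) = u0 + r * u0n n)
    (h1s : ∀ n : ℕ, u1n (n + 1) = r * u1n n + r * (u0n n) ^ 2) :
    Filter.Tendsto u1n Filter.atTop (nhds (u0 ^ 2 * r / (1 - r) ^ 3)) := by
  rw [← Real.norm_eq_abs] at hr
  have hu0 : Tendsto u0n atTop (𝓝 ((1 - r)⁻¹ • u0)) :=
    tendsto_of_succ_eq_smul_add hr tendsto_const_nhds fun n => by rw [h0s, add_comm, smul_eq_mul]
  have hu1 := tendsto_of_succ_eq_smul_add hr ((hu0.pow 2).const_mul r) fun n => h1s n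
  convert hu1 using 2
  simp only [smul_eq_mul]
  rw [div_eq_mul_inv, ← inv_pow]
  ring

theorem stmt_1 (r u0 : ℝ) (hr : |r| < 1)
    (u0n u1n : ℕ → ℝ)
    (h00 : u0n 0 = u0)
    (h0s : ∀ n : ℕ, u0n (n + 1) = u0 + r * u0n n)
    (h10 : u1n 0 = 0)
    (h1s : ∀ n : ℕ, u1n (n + 1) = r * u1n n + r * (u0n n) ^ 2) :
    Filter.Tendsto u1n Filter.atTop (nhds (u0 ^ 2 * r / (1 - r) ^ 3)) :=
  stmt_1_general r u0 hr u0n u1n h0s h1s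
end

section
/- Let r, u0 be real numbers with |r| < 1. Define u0n, u1n, u2n : ℕ → ℝ by u0n(0) = u0, u0n(n+1) = u0 + r·u0n(n); u1n(0) = 0, u1n(n+1) = r·u1n(n) + r·u0n(n)²; u2n(0) = 0, u2n(n+1) = r·u2n(n) + 2r·u0n(n)·u1n(n). Then u2n(n) converges as n → ∞, with limit 2·u0³·r²/(1−r)⁵. -/
open Filter

lemma aux_tendsto_zero (r : ℝ) (hr : |r| < 1) (y e : ℕ → ℝ)
    (hy : ∀ n, y (n + 1) = r * y n + e n)
    (he : Tendsto e atTop (nhds 0)) :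
    Tendsto y atTop (nhds 0) := by
  rw [Metric.tendsto_atTop] at he ⊢
  intro δ hδ
  have hc : 0 < 1 - |r| := by linarith
  obtain ⟨N, hN⟩ := he (δ * (1 - |r|) / 4) (by positivity)
  have key : ∀ m, |y (N + m)| ≤ |r| ^ m * |y N| + δ / 4 := by
    intro m
    induction m with
    | zero => simp; linarith
    | succ m ih =>
      have h1 : |y (N + (m + 1))| ≤ |r| * |y (N + m)| + |e (N + m)| := by
        rw [show N + (m + 1) = (N + m) + 1 from rfl, hy]
        calc |r * y (N + m) + e (N + m)| ≤ |r * y (N + m)| + |e (N + m)| := abs_add_le _ _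
          _ = |r| * |y (N + m)| + |e (N + m)| := by rw [abs_mul]
      have h2 : |e (N + m)| < δ * (1 - |r|) / 4 := by
        have := hN (N + m) (Nat.le_add_right _ _)
        simpa [Real.dist_eq] using this
      have hr0 : (0:ℝ) ≤ |r| := abs_nonneg r
      have hp : |r| ^ (m + 1) = |r| ^ m * |r| := pow_succ _ _
      nlinarith [mul_le_mul_of_nonneg_left ih hr0, pow_nonneg hr0 m, abs_nonneg (y N)]
  have h3 : Tendsto (fun m => |r| ^ m * |y N|) atTop (nhds 0) := by
    simpa using (tendsto_pow_atTop_nhds_zero_of_lt_one (abs_nonneg r) hr).mul_const (|y N|)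
  rw [Metric.tendsto_atTop] at h3
  obtain ⟨M, hM⟩ := h3 (δ / 4) (by positivity)
  refine ⟨N + M, fun n hn => ?_⟩
  have hnm : n = N + (n - N) := by omega
  have hmM : M ≤ n - N := by omega
  have hb := key (n - N)
  have hs := hM (n - N) hmM
  rw [Real.dist_eq, sub_zero] at hs ⊢
  have h4 : |r| ^ (n - N) * |y N| < δ / 4 := (le_abs_self _).trans_lt hs
  rw [← hnm] at hb
  linarith

lemma aux_lim_rec (r : ℝ) (hr : |r| < 1) (x a : ℕ → ℝ) (L : ℝ)
    (hx : ∀ n, x (n + 1) = r * x n + a n)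
    (ha : Tendsto a atTop (nhds L)) :
    Tendsto x atTop (nhds (L / (1 - r))) := by
  have hr1 : (1:ℝ) - r ≠ 0 := by
    rw [abs_lt] at hr
    intro h; linarith
  have he : Tendsto (fun n => a n - L) atTop (nhds 0) := by
    simpa using ha.sub_const L
  have hz := aux_tendsto_zero r hr (fun n => x n - L / (1 - r)) (fun n => a n - L)
    (fun n => by
      show x (n + 1) - L / (1 - r) = r * (x n - L / (1 - r)) + (a n - L)
      rw [hx n]; field_simp; ring) he
  have := hz.add_const (L / (1 - r))
  simpa using this

theorem stmt_2 (r u0 : ℝ) (hr : |r| < 1)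
    (u0n u1n u2n : ℕ → ℝ)
    (h00 : u0n 0 = u0)
    (h0s : ∀ n : ℕ, u0n (n + 1) = u0 + r * u0n n)
    (h10 : u1n 0 = 0)
    (h1s : ∀ n : ℕ, u1n (n + 1) = r * u1n n + r * (u0n n) ^ 2)
    (h20 : u2n 0 = 0)
    (h2s : ∀ n : ℕ, u2n (n + 1) = r * u2n n + 2 * r * u0n n * u1n n) :
    Filter.Tendsto u2n Filter.atTop (nhds (2 * u0 ^ 3 * r ^ 2 / (1 - r) ^ 5)) := by
  have hr1 : (1:ℝ) - r ≠ 0 := by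
    rw [abs_lt] at hr; intro h; linarith
  have h0 : Tendsto u0n atTop (nhds (u0 / (1 - r))) :=
    aux_lim_rec r hr u0n (fun _ => u0) u0 (fun n => by rw [h0s]; ring) tendsto_const_nhds
  have h1 : Tendsto u1n atTop (nhds ((r * (u0 / (1 - r)) ^ 2) / (1 - r))) :=
    aux_lim_rec r hr u1n (fun n => r * (u0n n) ^ 2) (r * (u0 / (1 - r)) ^ 2)
      (fun n => h1s n) ((h0.pow 2).const_mul r)
  have h2 : Tendsto u2n atTop
      (nhds ((2 * r * ((u0 / (1 - r)) * ((r * (u0 / (1 - r)) ^ 2) / (1 - r)))) / (1 - r))) :=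
    aux_lim_rec r hr u2n (fun n => 2 * r * u0n n * u1n n)
      (2 * r * ((u0 / (1 - r)) * ((r * (u0 / (1 - r)) ^ 2) / (1 - r))))
      (fun n => h2s n)
      (by simpa [mul_assoc] using (h0.mul h1).const_mul (2 * r))
  convert h2 using 2
  field_simp
end

section
/- Let r, ε, u0 be real numbers with 0 ≤ r < 1, ε ≥ 0, u0 ≥ 0, and set θ = r·ε·u0/(1−r)². Assume θ ≤ 1/4. Define U = (u0/(1−r))·(1 + 4θ/(1+√(1−4θ))²). Then U satisfies the fixed-point equation U = u0 + r·(1 + ε·U)·U. -/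
/-!
Writing `s = √(1 - 4θ)`, we have `4θ = (1 - s)(1 + s)`, so the displayed value is
`U = 2 u0 / ((1 - r)(1 + s))`. This is the smaller root `(1 - r)(1 - s) / (2 r ε)` of the quadratic
`r ε U² - (1 - r) U + u0 = 0` (the fixed-point equation) with the numerator rationalised, a form that
stays valid when `r ε = 0`.
-/

lemma one_add_div_one_add_sq {K : Type*} [Field K] {θ s : K} (hs1 : 1 + s ≠ 0)
    (hs : s ^ 2 = 1 - 4 * θ) : 1 + 4 * θ / (1 + s) ^ 2 = 2 / (1 + s) := by
  field_simp
  linear_combination hs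

lemma quadratic_eq_zero_of_rationalized_root {K : Type*} [Field K] {a b c s : K} (hb : b ≠ 0)
    (hs1 : 1 + s ≠ 0) (hs : (b * s) ^ 2 = b ^ 2 - 4 * a * c) :
    a * (2 * c / (b * (1 + s))) ^ 2 - b * (2 * c / (b * (1 + s))) + c = 0 := by
  field_simp
  linear_combination c * hs

theorem stmt_5_general (r ε u0 θ U : ℝ)
    (hr1 : r < 1)
    (hθdef : θ = r * ε * u0 / (1 - r) ^ 2) (hθ : θ ≤ 1 / 4)
    (hU : U = (u0 / (1 - r)) * (1 + 4 * θ / (1 + Real.sqrt (1 - 4 * θ)) ^ 2)) :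
    U = u0 + r * (1 + ε * U) * U := by
  set s := Real.sqrt (1 - 4 * θ)
  have hr : 1 - r ≠ 0 := by linarith
  have hs1 : 1 + s ≠ 0 := by positivity
  have hs : s ^ 2 = 1 - 4 * θ := Real.sq_sqrt (by linarith)
  have hU' : U = 2 * u0 / ((1 - r) * (1 + s)) := by
    rw [hU, one_add_div_one_add_sq hs1 hs]
    field_simp
  have hdisc : ((1 - r) * s) ^ 2 = (1 - r) ^ 2 - 4 * (r * ε) * u0 := by
    rw [mul_pow, hs, hθdef]
    field_simp
  have hroot := quadratic_eq_zero_of_rationalized_root hr hs1 hdisc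
  rw [← hU'] at hroot
  linear_combination -hroot

theorem stmt_5 (r ε u0 θ U : ℝ)
    (hr0 : 0 ≤ r) (hr1 : r < 1) (hε : 0 ≤ ε) (hu0 : 0 ≤ u0)
    (hθdef : θ = r * ε * u0 / (1 - r) ^ 2) (hθ : θ ≤ 1 / 4)
    (hU : U = (u0 / (1 - r)) * (1 + 4 * θ / (1 + Real.sqrt (1 - 4 * θ)) ^ 2)) :
    U = u0 + r * (1 + ε * U) * U :=
  stmt_5_general r ε u0 θ U hr1 hθdef hθ hU
end

section
/- Let Z ≥ 1 be a natural number and let θ be a real number with 0 ≤ θ ≤ Z^Z/(Z+1)^(Z+1). Then the series Σ_{i=1}^{∞} C(i,Z)·θ^i is summable, where C(i,Z) = binomial((Z+1)·i, i)/(Z·i + 1) is the Pfaff–Fuss–Catalan number. -/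
/-!
Stirling's bounds `√(2πn) (n/e)^n ≤ n! ≤ e √n (n/e)^n` give
`C(k+m, k) · k^k m^m / (k+m)^(k+m) ≤ e/(2π) · √((k+m)/(km))`.
For `k = i`, `m = Z i` the entropy factor is exactly `θ_max(Z)^i`, so
`C(i,Z) θ_max^i = O(i^(-3/2))`, and the series converges for every `0 ≤ θ ≤ θ_max`.
-/

open Real Nat Filter

noncomputable def fussCatalan (Z i : ℕ) : ℝ := ((Z + 1) * i).choose i / (Z * i + 1)

noncomputable def thetaMax (Z : ℕ) : ℝ := (Z : ℝ) ^ Z / ((Z : ℝ) + 1) ^ (Z + 1)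

theorem factorial_le_exp_one_mul_sqrt {n : ℕ} (hn : n ≠ 0) :
    (n ! : ℝ) ≤ exp 1 * √n * (n / exp 1) ^ n := by
  obtain ⟨n, rfl⟩ : ∃ n', n = n' + 1 := ⟨n - 1, by omega⟩
  have h : Stirling.stirlingSeq (n + 1) ≤ Stirling.stirlingSeq 1 :=
    Stirling.stirlingSeq'_antitone (Nat.zero_le n)
  rw [Stirling.stirlingSeq_one, Stirling.stirlingSeq, div_le_iff₀ (by positivity),
    sqrt_mul zero_le_two] at h
  refine h.trans_eq ?_
  field_simp

theorem add_choose_mul_pow_div_le {k m : ℕ} (hk : k ≠ 0) (hm : m ≠ 0) :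
    ((k + m).choose k : ℝ) * ((k : ℝ) ^ k * (m : ℝ) ^ m / ((k : ℝ) + m) ^ (k + m))
      ≤ exp 1 / (2 * π) * √((k + m) / (k * m)) := by
  have hk' : (0 : ℝ) < k := by positivity
  have hm' : (0 : ℝ) < m := by positivity
  set E := (k : ℝ) ^ k * (m : ℝ) ^ m / ((k : ℝ) + m) ^ (k + m)
  set Q := (((k : ℝ) + m) / exp 1) ^ (k + m)
  have hQ : 0 < Q := by positivity
  have hfact : ((k + m).choose k : ℝ) * (k ! * m !) = (k + m)! := by
    have := Nat.add_choose_mul_factorial_mul_factorial k m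
    rw [← Nat.choose_symm_add, mul_assoc] at this
    exact_mod_cast this
  have hlower : √(2 * π * k) * (k / exp 1) ^ k * (√(2 * π * m) * (m / exp 1) ^ m)
      = 2 * π * (√k * √m) * E * Q := by
    rw [sqrt_mul' _ hk'.le, sqrt_mul' _ hm'.le]
    simp only [E, Q, div_pow, pow_add]
    field_simp
    exact sq_sqrt (by positivity)
  have hupper : ((k + m)! : ℝ) ≤ exp 1 * √(k + m) * Q := by
    have := factorial_le_exp_one_mul_sqrt (n := k + m) (by omega)
    push_cast at this
    exact this
  have key : (k + m).choose k * E * (2 * π * (√k * √m)) * Q ≤ exp 1 * √(k + m) * Q :=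
    calc (k + m).choose k * E * (2 * π * (√k * √m)) * Q
        = (k + m).choose k *
            (√(2 * π * k) * (k / exp 1) ^ k * (√(2 * π * m) * (m / exp 1) ^ m)) := by
          rw [hlower]; ring
      _ ≤ (k + m).choose k * (k ! * m !) := by
          gcongr
          · exact Stirling.le_factorial_stirling k
          · exact Stirling.le_factorial_stirling m
      _ ≤ exp 1 * √(k + m) * Q := hfact ▸ hupper
  rw [sqrt_div (by positivity), sqrt_mul hk'.le]
  rw [mul_le_mul_iff_left₀ hQ] at key
  field_simp
  linarith

theorem choose_mul_thetaMax_pow_le {Z i : ℕ} (hZ : Z ≠ 0) (hi : i ≠ 0) :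
    ((Z + 1) * i).choose i * thetaMax Z ^ i ≤ exp 1 / (2 * π) * √(2 / i) := by
  have hZ' : (1 : ℝ) ≤ Z := by exact_mod_cast Nat.one_le_iff_ne_zero.mpr hZ
  have hi' : (0 : ℝ) < i := by positivity
  have h := add_choose_mul_pow_div_le hi (mul_ne_zero hZ hi)
  have hentropy : (i : ℝ) ^ i * ((Z : ℝ) * i) ^ (Z * i) / ((i : ℝ) + Z * i) ^ (i + Z * i)
      = thetaMax Z ^ i := by
    rw [thetaMax, show (i : ℝ) + Z * i = (Z + 1) * i by ring,
      show i + Z * i = (Z + 1) * i by ring, mul_pow, mul_pow, div_pow, ← pow_mul, ← pow_mul,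
      pow_mul _ Z i, pow_mul _ (Z + 1) i]
    field_simp
    ring
  push_cast at h
  rw [hentropy, show i + Z * i = (Z + 1) * i by ring] at h
  refine h.trans (mul_le_mul_of_nonneg_left (sqrt_le_sqrt ?_) (by positivity))
  rw [div_le_div_iff₀ (by positivity) hi']
  nlinarith [mul_le_mul_of_nonneg_right hZ' (sq_nonneg (i : ℝ))]

theorem summable_fussCatalan_mul_pow {Z : ℕ} (hZ : Z ≠ 0) {θ : ℝ} (hθ0 : 0 ≤ θ)
    (hθ : θ ≤ thetaMax Z) : Summable fun i => fussCatalan Z i * θ ^ i := by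
  have hZ' : (1 : ℝ) ≤ Z := by exact_mod_cast Nat.one_le_iff_ne_zero.mpr hZ
  refine ((summable_nat_rpow.mpr (by norm_num : -(3 / 2 : ℝ) < -1)).mul_left
    (exp 1 / (2 * π) * √2)).of_norm_bounded_eventually_nat ?_
  filter_upwards [eventually_ne_atTop 0] with i hi
  have hi' : (0 : ℝ) < i := by positivity
  rw [norm_of_nonneg (mul_nonneg (by unfold fussCatalan; positivity) (pow_nonneg hθ0 _))]
  calc fussCatalan Z i * θ ^ i
      ≤ ((Z + 1) * i).choose i * thetaMax Z ^ i / i := by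
        have hmax : 0 ≤ thetaMax Z := by unfold thetaMax; positivity
        rw [fussCatalan, div_mul_eq_mul_div]
        gcongr
        nlinarith
    _ ≤ exp 1 / (2 * π) * √(2 / i) / i :=
        div_le_div_of_nonneg_right (choose_mul_thetaMax_pow_le hZ hi) hi'.le
    _ = exp 1 / (2 * π) * √2 * (i : ℝ) ^ (-(3 / 2) : ℝ) := by
        rw [show (-(3 / 2) : ℝ) = -1 - 1 / 2 by norm_num, rpow_sub hi', rpow_neg_one,
          ← sqrt_eq_rpow, sqrt_div' _ hi'.le]
        field_simp

theorem stmt_8 (Z : ℕ) (hZ : 1 ≤ Z) (θ : ℝ) (hθ0 : 0 ≤ θ)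
    (hθ : θ ≤ (Z : ℝ) ^ Z / ((Z : ℝ) + 1) ^ (Z + 1)) :
    Summable (fun i : ℕ =>
      ((Nat.choose ((Z + 1) * (i + 1)) (i + 1) : ℝ) / ((Z : ℝ) * (i + 1) + 1)) *
        θ ^ (i + 1)) := by
  have h := (summable_nat_add_iff 1).mpr (summable_fussCatalan_mul_pow (by omega) hθ0 hθ)
  simpa [fussCatalan] using h
end

section
/- Let Z ≥ 1 be a natural number and let θ be a real number with θ > Z^Z/(Z+1)^(Z+1). Then the series Σ_{i=1}^{∞} C(i,Z)·θ^i is NOT summable, where C(i,Z) = binomial((Z+1)·i, i)/(Z·i + 1) is the Pfaff–Fuss–Catalan number. -/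
lemma aux_up (Z i j : ℕ) (hj : j < i) :
    Nat.choose ((Z+1)*i) j * Z^((Z+1)*i - j) ≤
      Nat.choose ((Z+1)*i) (j+1) * Z^((Z+1)*i - (j+1)) := by
  set n := (Z+1)*i with hn
  have hji : j + 1 ≤ i := hj
  have hin : i ≤ n := Nat.le_mul_of_pos_left i (Nat.succ_pos Z)
  have hkey : Z * (j+1) ≤ n - j := by
    have h1 : (Z+1)*(j+1) ≤ n := Nat.mul_le_mul_left _ hji
    have h2 : Z*(j+1) + (j+1) = (Z+1)*(j+1) := by ring
    omega
  have hchoose : Nat.choose n j * Z ≤ Nat.choose n (j+1) := by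
    have h3 : Nat.choose n (j+1) * (j+1) = Nat.choose n j * (n - j) :=
      Nat.choose_succ_right_eq n j
    have h4 : Nat.choose n j * Z * (j+1) ≤ Nat.choose n j * (n - j) := by
      calc Nat.choose n j * Z * (j+1) = Nat.choose n j * (Z * (j+1)) := by ring
      _ ≤ Nat.choose n j * (n - j) := Nat.mul_le_mul_left _ hkey
    exact Nat.le_of_mul_le_mul_right
      (by omega : Nat.choose n j * Z * (j+1) ≤ Nat.choose n (j+1) * (j+1)) (by omega)
  have hpow : Z^(n - j) = Z * Z^(n - (j+1)) := by
    have : n - j = (n - (j+1)) + 1 := by omega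
    rw [this, pow_succ]; ring
  calc Nat.choose n j * Z^(n-j) = (Nat.choose n j * Z) * Z^(n-(j+1)) := by rw [hpow]; ring
  _ ≤ Nat.choose n (j+1) * Z^(n-(j+1)) := Nat.mul_le_mul_right _ hchoose

lemma aux_down (Z i j : ℕ) (hj : i ≤ j) :
    Nat.choose ((Z+1)*i) (j+1) * Z^((Z+1)*i - (j+1)) ≤
      Nat.choose ((Z+1)*i) j * Z^((Z+1)*i - j) := by
  set n := (Z+1)*i with hn
  by_cases hjn : n ≤ j
  · rw [Nat.choose_eq_zero_of_lt (by omega)]; simp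
  · push_neg at hjn
    have hkey : n - j ≤ Z * (j+1) := by
      have h1 : n = Z*i + i := by rw [hn]; ring
      have h2 : Z * i ≤ Z * (j+1) := Nat.mul_le_mul_left _ (by omega)
      omega
    have hchoose : Nat.choose n (j+1) ≤ Nat.choose n j * Z := by
      have h3 : Nat.choose n (j+1) * (j+1) = Nat.choose n j * (n - j) :=
        Nat.choose_succ_right_eq n j
      have h4 : Nat.choose n j * (n - j) ≤ Nat.choose n j * Z * (j+1) := by
        calc Nat.choose n j * (n - j) ≤ Nat.choose n j * (Z * (j+1)) :=
              Nat.mul_le_mul_left _ hkey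
        _ = Nat.choose n j * Z * (j+1) := by ring
      exact Nat.le_of_mul_le_mul_right
        (by omega : Nat.choose n (j+1) * (j+1) ≤ Nat.choose n j * Z * (j+1)) (by omega)
    have hpow : Z^(n - j) = Z * Z^(n - (j+1)) := by
      have : n - j = (n - (j+1)) + 1 := by omega
      rw [this, pow_succ]; ring
    calc Nat.choose n (j+1) * Z^(n-(j+1)) ≤ (Nat.choose n j * Z) * Z^(n-(j+1)) :=
          Nat.mul_le_mul_right _ hchoose
    _ = Nat.choose n j * Z^(n-j) := by rw [hpow]; ring

lemma aux_max_le (Z i j : ℕ) (h : j ≤ i) :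
    Nat.choose ((Z+1)*i) j * Z^((Z+1)*i - j) ≤
      Nat.choose ((Z+1)*i) i * Z^((Z+1)*i - i) := by
  obtain ⟨k, hk⟩ := Nat.le.dest h
  clear h
  induction k generalizing j with
  | zero =>
    obtain rfl : j = i := by omega
    exact le_refl _
  | succ k ih =>
    calc Nat.choose ((Z+1)*i) j * Z^((Z+1)*i - j)
        ≤ Nat.choose ((Z+1)*i) (j+1) * Z^((Z+1)*i - (j+1)) := aux_up Z i j (by omega)
    _ ≤ _ := ih (j+1) (by omega)

lemma aux_max_ge (Z i k : ℕ) :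
    Nat.choose ((Z+1)*i) (i+k) * Z^((Z+1)*i - (i+k)) ≤
      Nat.choose ((Z+1)*i) i * Z^((Z+1)*i - i) := by
  induction k with
  | zero => exact le_refl _
  | succ k ih =>
    calc Nat.choose ((Z+1)*i) (i+(k+1)) * Z^((Z+1)*i - (i+(k+1)))
        = Nat.choose ((Z+1)*i) ((i+k)+1) * Z^((Z+1)*i - ((i+k)+1)) := by ring_nf
    _ ≤ Nat.choose ((Z+1)*i) (i+k) * Z^((Z+1)*i - (i+k)) :=
        aux_down Z i (i+k) (Nat.le_add_right _ _)
    _ ≤ _ := ih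

lemma aux_max (Z i j : ℕ) :
    Nat.choose ((Z+1)*i) j * Z^((Z+1)*i - j) ≤
      Nat.choose ((Z+1)*i) i * Z^((Z+1)*i - i) := by
  rcases le_or_gt j i with h | h
  · exact aux_max_le Z i j h
  · obtain ⟨k, rfl⟩ := Nat.le.dest h.le
    exact aux_max_ge Z i k

lemma aux_sum (Z i : ℕ) :
    (Z+1)^((Z+1)*i) ≤ ((Z+1)*i + 1) * (Nat.choose ((Z+1)*i) i * Z^((Z+1)*i - i)) := by
  set n := (Z+1)*i with hn
  have hbin : (Z+1)^n = ∑ j ∈ Finset.range (n+1), Nat.choose n j * Z^(n-j) := by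
    rw [add_comm Z 1]
    rw [add_pow 1 Z n]
    apply Finset.sum_congr rfl
    intro j hj
    simp [mul_comm]
  rw [hbin]
  calc ∑ j ∈ Finset.range (n+1), Nat.choose n j * Z^(n-j)
      ≤ ∑ _j ∈ Finset.range (n+1), Nat.choose n i * Z^(n-i) :=
        Finset.sum_le_sum (fun j _ => aux_max Z i j)
  _ = (n+1) * (Nat.choose n i * Z^(n-i)) := by
        rw [Finset.sum_const, Finset.card_range]; ring

open Filter

theorem stmt_9 (Z : ℕ) (hZ : 1 ≤ Z) (θ : ℝ)
    (hθ : (Z : ℝ) ^ Z / ((Z : ℝ) + 1) ^ (Z + 1) < θ) :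
    ¬ Summable (fun i : ℕ =>
      ((Nat.choose ((Z + 1) * (i + 1)) (i + 1) : ℝ) / ((Z : ℝ) * (i + 1) + 1)) *
        θ ^ (i + 1)) := by
  intro hsum
  have hZR : (1:ℝ) ≤ (Z:ℝ) := by exact_mod_cast hZ
  have hQ : (0:ℝ) < (Z:ℝ)^Z := by positivity
  have hP : (0:ℝ) < ((Z:ℝ)+1)^(Z+1) := by positivity
  have hθ0 : 0 < θ := lt_trans (by positivity) hθ
  set P : ℝ := ((Z:ℝ)+1)^(Z+1) with hPdef
  set Q : ℝ := (Z:ℝ)^Z with hQdef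
  set r : ℝ := θ * P / Q with hrdef
  have hr1 : 1 < r := by
    rw [hrdef, lt_div_iff₀ hQ, one_mul]
    have := (div_lt_iff₀ hP).mp hθ
    nlinarith
  have hr0 : 0 < r := lt_trans one_pos hr1
  set ε : ℝ := 1/(((Z:ℝ)+2)*((Z:ℝ)+1)) with hεdef
  have hε0 : 0 < ε := by positivity
  -- key pointwise bound
  have key : ∀ i : ℕ, ε ≤
      ((Nat.choose ((Z + 1) * (i + 1)) (i + 1) : ℝ) / ((Z : ℝ) * (i + 1) + 1)) * θ ^ (i + 1)
        * (((i:ℝ)+1)^2 * (r⁻¹)^(i+1)) := by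
    intro i
    set m : ℕ := i + 1 with hm
    have hmR : (1:ℝ) ≤ (m:ℝ) := by exact_mod_cast Nat.le_add_left 1 i
    have hmR0 : (0:ℝ) < (m:ℝ) := lt_of_lt_of_le one_pos hmR
    have hnm : (Z+1)*m - m = Z*m := by
      rw [show (Z+1)*m = Z*m + m from by ring, Nat.add_sub_cancel]
    have hnat := aux_sum Z m
    rw [hnm] at hnat
    have hreal : P^m ≤ (((Z:ℝ)+1)*(m:ℝ)+1) * ((Nat.choose ((Z+1)*m) m : ℝ) * Q^m) := by
      have := (Nat.cast_le (α := ℝ)).mpr hnat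
      push_cast at this
      calc P^m = ((Z:ℝ)+1)^((Z+1)*m) := by rw [hPdef, ← pow_mul]
      _ ≤ _ := by
          rw [hQdef, ← pow_mul]
          convert this using 2 <;> push_cast <;> ring
    set A : ℝ := (Nat.choose ((Z+1)*m) m : ℝ) with hA
    set L : ℝ := ((Z:ℝ)+1)*(m:ℝ)+1 with hL
    set D : ℝ := (Z:ℝ)*(m:ℝ)+1 with hD
    have hL0 : 0 < L := by positivity
    have hD0 : 0 < D := by positivity
    have hAlb : P^m / (L * Q^m) ≤ A := by
      rw [div_le_iff₀ (by positivity)]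
      calc P^m ≤ L * (A * Q^m) := hreal
      _ = A * (L * Q^m) := by ring
    have hcast : ((i:ℝ)+1) = (m:ℝ) := by rw [hm, Nat.cast_add, Nat.cast_one]
    rw [hcast, ← hD]
    have hrinv : (r⁻¹)^m = Q^m / (θ^m * P^m) := by
      rw [hrdef, inv_div, div_pow, mul_pow]
    have hPm : P^m ≠ 0 := by positivity
    have hQm : Q^m ≠ 0 := by positivity
    have hθm : θ^m ≠ 0 := by positivity
    have hLne : L ≠ 0 := ne_of_gt hL0
    have hDne : D ≠ 0 := ne_of_gt hD0
    have heq : (P^m / (L * Q^m)) / D * θ^m * ((m:ℝ)^2 * (r⁻¹)^m) = (m:ℝ)^2 / (L * D) := by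
      rw [hrinv]
      field_simp
    calc ε ≤ (m:ℝ)^2 / (L * D) := by
          rw [hεdef, div_le_div_iff₀ (by positivity) (by positivity), hL, hD]
          nlinarith [sq_nonneg ((m:ℝ) - 1), mul_le_mul_of_nonneg_left hmR (le_of_lt hmR0)]
    _ = (P^m / (L * Q^m)) / D * θ^m * ((m:ℝ)^2 * (r⁻¹)^m) := heq.symm
    _ ≤ A / D * θ^m * ((m:ℝ)^2 * (r⁻¹)^m) := by gcongr
  -- contradiction
  have hterm := hsum.tendsto_atTop_zero
  have hinv : ‖r⁻¹‖ < 1 := by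
    rw [norm_inv, Real.norm_eq_abs, abs_of_pos hr0]
    rw [inv_lt_one_iff₀]
    right; exact hr1
  have hsum2 : Summable (fun m : ℕ => (m:ℝ)^2 * (r⁻¹)^m) := by
    simpa using summable_pow_mul_geometric_of_norm_lt_one 2 hinv
  have hc : Tendsto (fun i : ℕ => ((i:ℝ)+1)^2 * (r⁻¹)^(i+1)) atTop (nhds 0) := by
    have h0 := hsum2.tendsto_atTop_zero
    have h1 := h0.comp (tendsto_add_atTop_nat 1)
    have heq2 : (fun i : ℕ => ((i:ℝ)+1)^2 * (r⁻¹)^(i+1))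
        = (fun m : ℕ => (m:ℝ)^2 * (r⁻¹)^m) ∘ (fun a => a+1) := by
      funext a; simp only [Function.comp]; push_cast; ring
    rw [heq2]; exact h1
  have hprod := hterm.mul hc
  rw [mul_zero] at hprod
  have hev : ∀ᶠ i : ℕ in atTop,
      ((Nat.choose ((Z + 1) * (i + 1)) (i + 1) : ℝ) / ((Z : ℝ) * (i + 1) + 1)) * θ ^ (i + 1)
        * (((i:ℝ)+1)^2 * (r⁻¹)^(i+1)) < ε :=
    hprod.eventually_lt_const hε0
  obtain ⟨i, hi⟩ := hev.exists
  exact absurd (key i) (not_le.mpr hi)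
end

section
/- Let ε̂ > 0 be a real number. For each natural number Z ≥ 1, let r_Z be the unique real number in (0,1) satisfying (1−r_Z)^(Z+1) = ε̂·((Z+1)^(Z+1)/Z^Z)·r_Z. Then r_{Z+1} < r_Z; that is, the maximum allowable stability number on the stability border strictly decreases as the degree of nonlinearity Z increases. -/
/-!
Write `K Z = (Z+1)^(Z+1) / Z^Z` for the constant in the border equation `(1-r)^(Z+1) = ε̂ K(Z) r`.
Since `log K(Z) = f(Z+1) - f(Z)` with `f x = x log x` convex, `K` is nondecreasing in `Z`.
Passing from `Z` to `Z+1` therefore shrinks the left side of the border equation on `(0,1)` (one more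
factor `1 - r < 1`) and enlarges the right side, so the crossing point moves to the left.
-/

open Real

noncomputable def stabilityBorderConst (Z : ℕ) : ℝ := ((Z : ℝ) + 1) ^ (Z + 1) / (Z : ℝ) ^ Z

-- Also true at `n = 0`, where both `0 ^ 0` and `exp (0 * log 0)` are `1`.
lemma natCast_pow_self_eq_exp (n : ℕ) : (n : ℝ) ^ n = exp (n * log n) := by
  rcases n.eq_zero_or_pos with rfl | hn
  · simp
  · rw [← log_pow, exp_log (by positivity)]

lemma stabilityBorderConst_eq_exp (Z : ℕ) :
    stabilityBorderConst Z = exp (((Z : ℝ) + 1) * log ((Z : ℝ) + 1) - Z * log Z) := by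
  have hsucc := natCast_pow_self_eq_exp (Z + 1)
  push_cast at hsucc
  rw [stabilityBorderConst, exp_sub, hsucc, natCast_pow_self_eq_exp]

lemma stabilityBorderConst_pos (Z : ℕ) : 0 < stabilityBorderConst Z := by
  rw [stabilityBorderConst_eq_exp]
  exact exp_pos _

lemma monotone_stabilityBorderConst : Monotone stabilityBorderConst := by
  refine monotone_nat_of_le_succ fun Z => ?_
  have hslope := Real.strictConvexOn_mul_log.convexOn.slope_mono_adjacent
    (x := Z) (y := Z + 1) (z := Z + 2) (Set.mem_Ici.2 (by positivity))
    (Set.mem_Ici.2 (by positivity)) (by simp) (by simp)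
  rw [show (Z : ℝ) + 1 - Z = 1 by ring, show (Z : ℝ) + 2 - (Z + 1) = 1 by ring, div_one,
    div_one] at hslope
  rw [stabilityBorderConst_eq_exp, stabilityBorderConst_eq_exp, exp_le_exp]
  push_cast
  rw [show (Z : ℝ) + 1 + 1 = Z + 2 by ring]
  exact hslope

lemma lt_of_one_sub_pow_eq_mul {r r' c c' : ℝ} {k : ℕ} (hc : 0 ≤ c) (hcc' : c ≤ c')
    (hr'0 : 0 < r') (hr'1 : r' < 1)
    (h : (1 - r) ^ k = c * r) (h' : (1 - r') ^ (k + 1) = c' * r') : r' < r := by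
  by_contra! hrr'
  have hpos : 0 < (1 - r') ^ k := pow_pos (by linarith) k
  have : (1 - r') ^ k < (1 - r') ^ k := calc
    (1 - r') ^ k ≤ (1 - r) ^ k := pow_le_pow_left₀ (by linarith) (by linarith) k
    _ = c * r := h
    _ ≤ c * r' := mul_le_mul_of_nonneg_left hrr' hc
    _ ≤ c' * r' := mul_le_mul_of_nonneg_right hcc' hr'0.le
    _ = (1 - r') ^ k * (1 - r') := by rw [← h', pow_succ]
    _ < (1 - r') ^ k := mul_lt_of_lt_one_right hpos (by linarith)
  exact lt_irrefl _ this

theorem stmt_13_general (ehat : ℝ) (hε : 0 < ehat) (Z : ℕ)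
    (rZ rZ' : ℝ)
    (hrZ : (1 - rZ) ^ (Z + 1) = ehat * (((Z : ℝ) + 1) ^ (Z + 1) / (Z : ℝ) ^ Z) * rZ)
    (hrZ'0 : 0 < rZ') (hrZ'1 : rZ' < 1)
    (hrZ' : (1 - rZ') ^ (Z + 2) =
      ehat * (((Z : ℝ) + 2) ^ (Z + 2) / ((Z : ℝ) + 1) ^ (Z + 1)) * rZ') :
    rZ' < rZ := by
  have hsucc : stabilityBorderConst (Z + 1) = ((Z : ℝ) + 2) ^ (Z + 2) / ((Z : ℝ) + 1) ^ (Z + 1) := by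
    rw [stabilityBorderConst]
    push_cast
    rw [show (Z : ℝ) + 1 + 1 = Z + 2 by ring]
  refine lt_of_one_sub_pow_eq_mul (c := ehat * stabilityBorderConst Z)
    (c' := ehat * stabilityBorderConst (Z + 1)) ?_ ?_ hrZ'0 hrZ'1 hrZ ?_
  · exact mul_nonneg hε.le (stabilityBorderConst_pos Z).le
  · exact mul_le_mul_of_nonneg_left (monotone_stabilityBorderConst Z.le_succ) hε.le
  · rw [hsucc]; exact hrZ'

/-- `ehat` denotes the combined perturbation amplitude ε̂ = ε·u0^Z.
`rZ` and `rZ'` are the unique roots in (0,1) of the stability-border equations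
for nonlinearity degrees `Z` and `Z+1` respectively. -/
theorem stmt_13 (ehat : ℝ) (hε : 0 < ehat) (Z : ℕ) (hZ : 1 ≤ Z)
    (rZ rZ' : ℝ)
    (hrZ0 : 0 < rZ) (hrZ1 : rZ < 1)
    (hrZ : (1 - rZ) ^ (Z + 1) = ehat * (((Z : ℝ) + 1) ^ (Z + 1) / (Z : ℝ) ^ Z) * rZ)
    (hrZ'0 : 0 < rZ') (hrZ'1 : rZ' < 1)
    (hrZ' : (1 - rZ') ^ (Z + 2) =
      ehat * (((Z : ℝ) + 2) ^ (Z + 2) / ((Z : ℝ) + 1) ^ (Z + 1)) * rZ') :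
    rZ' < rZ :=
  stmt_13_general ehat hε Z rZ rZ' hrZ hrZ'0 hrZ'1 hrZ'
end

section
/- Let r, u0 be real numbers with r ≠ 1. Define u : ℕ → ℕ → ℝ by u(0,0) = u0, u(i,0) = 0 for i ≥ 1, (1−r)·u(0,n+1) = u0, and for i ≥ 1, (1−r)·u(i,n+1) = 2r·Σ_{j=0}^{i−1} u(j,n)·u(i−1−j,n+1) − r·Σ_{j=0}^{i−1} u(j,n)·u(i−1−j,n). Then for every i ≥ 0 and every n ≥ i+1, u(i,n) = C(i)·u0^(i+1)·r^i/(1−r)^(2i+1), where C(i) = (2i)!/(i!·(i+1)!) is the i-th Catalan number. -/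
/-!
With `x = u0 / (1 - r)` and `y = u0 r / (1 - r)²`, every amplitude `u(i, n)` with `n ≥ i + 1`
equals `C(i) x yⁱ`. By strong induction on `i`: all amplitudes entering the recursion for
`u(i+1, n+1)` are already in closed form, so both convolution sums equal the same value
`C(i+1) x² yⁱ` by Segner's recurrence, and `(1 - r) u(i+1, n+1) = (2r - r) C(i+1) x² yⁱ`.
-/

open Finset

theorem sum_range_catalan_mul_pow_mul {R : Type*} [CommSemiring R] (x y : R) (i : ℕ) :
    ∑ j ∈ range (i + 1), (catalan j * x * y ^ j) * (catalan (i - j) * x * y ^ (i - j)) =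
      catalan (i + 1) * x ^ 2 * y ^ i := by
  have hterm : ∀ j ∈ range (i + 1), (catalan j * x * y ^ j) * (catalan (i - j) * x * y ^ (i - j))
      = ((catalan j * catalan (i - j) : ℕ) : R) * (x ^ 2 * y ^ i) := by
    intro j hj
    obtain ⟨a, rfl⟩ := Nat.exists_eq_add_of_le (Nat.le_of_lt_succ (mem_range.mp hj))
    rw [Nat.add_sub_cancel_left]
    push_cast
    ring
  rw [sum_congr rfl hterm, ← sum_mul, ← Nat.cast_sum, catalan_succ, ← Fin.sum_univ_eq_sum_range
    (fun j => catalan j * catalan (i - j))]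
  push_cast
  ring

theorem catalan_eq_choose_div {K : Type*} [Field K] [CharZero K] (i : ℕ) :
    (catalan i : K) = (Nat.choose (2 * i) i : K) / (i + 1) := by
  rw [eq_div_iff (Nat.cast_add_one_ne_zero i), ← Nat.centralBinom_eq_two_mul_choose,
    ← succ_mul_catalan_eq_centralBinom]
  push_cast
  ring

theorem amplitude_eq_catalan {K : Type*} [Field K] (r u0 : K) (hr : r ≠ 1) (u : ℕ → ℕ → K)
    (h0s : ∀ n : ℕ, (1 - r) * u 0 (n + 1) = u0)
    (his : ∀ i : ℕ, 1 ≤ i → ∀ n : ℕ,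
      (1 - r) * u i (n + 1) =
        2 * r * ∑ j ∈ range i, u j n * u (i - 1 - j) (n + 1) -
        r * ∑ j ∈ range i, u j n * u (i - 1 - j) n) :
    ∀ i n : ℕ, i + 1 ≤ n → u i n = catalan i * (u0 / (1 - r)) * (u0 * r / (1 - r) ^ 2) ^ i := by
  have h1r : (1 : K) - r ≠ 0 := sub_ne_zero.mpr hr.symm
  set x := u0 / (1 - r)
  set y := u0 * r / (1 - r) ^ 2
  intro i
  induction i using Nat.strong_induction_on with
  | _ i ih =>
  intro n hn
  obtain ⟨m, rfl⟩ : ∃ m, n = m + 1 := ⟨n - 1, by omega⟩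
  rcases i with _ | k
  · simpa [x] using eq_div_of_mul_eq h1r ((mul_comm _ _).trans (h0s m))
  have hconv : ∀ m' ≥ m, ∑ j ∈ range (k + 1), u j m * u (k + 1 - 1 - j) m' =
      catalan (k + 1) * x ^ 2 * y ^ k := by
    intro m' hm'
    rw [← sum_range_catalan_mul_pow_mul]
    refine sum_congr rfl fun j hj => ?_
    have hjk := mem_range.mp hj
    rw [Nat.add_sub_cancel, ih j (by omega) m (by omega), ih (k - j) (by omega) m' (by omega)]
  have hrec : (1 - r) * u (k + 1) (m + 1) = r * (catalan (k + 1) * x ^ 2 * y ^ k) := by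
    rw [his (k + 1) le_add_self m, hconv (m + 1) (by omega), hconv m le_rfl]
    ring
  rw [← mul_right_inj' h1r, hrec]
  simp only [x, y, div_pow, mul_pow, ← pow_mul]
  field_simp
  ring

theorem stmt_14_general (r u0 : ℝ) (hr : r ≠ 1)
    (u : ℕ → ℕ → ℝ)
    (h0s : ∀ n : ℕ, (1 - r) * u 0 (n + 1) = u0)
    (his : ∀ i : ℕ, 1 ≤ i → ∀ n : ℕ,
      (1 - r) * u i (n + 1) =
        2 * r * ∑ j ∈ Finset.range i, u j n * u (i - 1 - j) (n + 1) -
        r * ∑ j ∈ Finset.range i, u j n * u (i - 1 - j) n) :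
    ∀ i : ℕ, ∀ n : ℕ, i + 1 ≤ n →
      u i n = ((Nat.choose (2 * i) i : ℝ) / (i + 1)) * u0 ^ (i + 1) * r ^ i /
        (1 - r) ^ (2 * i + 1) := by
  intro i n hn
  rw [amplitude_eq_catalan r u0 hr u h0s his i n hn, catalan_eq_choose_div, div_pow, mul_pow, ← pow_mul]
  field_simp
  ring

theorem stmt_14 (r u0 : ℝ) (hr : r ≠ 1)
    (u : ℕ → ℕ → ℝ)
    (h00 : u 0 0 = u0)
    (hi0 : ∀ i : ℕ, 1 ≤ i → u i 0 = 0)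
    (h0s : ∀ n : ℕ, (1 - r) * u 0 (n + 1) = u0)
    (his : ∀ i : ℕ, 1 ≤ i → ∀ n : ℕ,
      (1 - r) * u i (n + 1) =
        2 * r * ∑ j ∈ Finset.range i, u j n * u (i - 1 - j) (n + 1) -
        r * ∑ j ∈ Finset.range i, u j n * u (i - 1 - j) n) :
    ∀ i : ℕ, ∀ n : ℕ, i + 1 ≤ n →
      u i n = ((Nat.choose (2 * i) i : ℝ) / (i + 1)) * u0 ^ (i + 1) * r ^ i /
        (1 - r) ^ (2 * i + 1) :=
  stmt_14_general r u0 hr u h0s his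
end

section
/- Let θ be a real number with |θ| ≤ 1/4. Then the sequence k ↦ θ^(k+1)·(2k+2)!/((k+1)!·(k+2)!) tends to 0 as k → ∞. -/
open Filter Topology

/-!
The `k`-th term is `θ ^ n * catalan n` with `n = k + 1`. Since `(n + 1) * catalan n` is the central
binomial coefficient, which is at most `4 ^ n`, the term has absolute value at most
`(4 * |θ|) ^ n / (n + 1) ≤ 1 / (n + 1)`.
-/

theorem cast_factorial_two_mul_div_eq_catalan {K : Type*} [Field K] [CharZero K] (n : ℕ) :
    ((2 * n).factorial : K) / (n.factorial * (n + 1).factorial) = catalan n := by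
  have hcentral :
      ((n + 1 : ℕ) : K) * catalan n = (2 * n).factorial / (n.factorial * n.factorial) := by
    rw [← Nat.cast_mul, succ_mul_catalan_eq_centralBinom, Nat.centralBinom_eq_two_mul_choose,
      Nat.cast_choose K (by omega : n ≤ 2 * n), show 2 * n - n = n by omega]
  rw [Nat.factorial_succ, Nat.cast_mul, eq_comm,
    ← mul_right_inj' (n.cast_add_one_ne_zero (R := K)), ← Nat.cast_succ, hcentral]
  field_simp

theorem catalan_le_four_pow_div (n : ℕ) : (catalan n : ℝ) ≤ 4 ^ n / (n + 1) := by
  rw [le_div_iff₀ (by positivity), mul_comm]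
  exact_mod_cast (succ_mul_catalan_eq_centralBinom n).trans_le (Nat.centralBinom_le_four_pow n)

theorem tendsto_pow_mul_catalan {θ : ℝ} (hθ : |θ| ≤ 1 / 4) :
    Tendsto (fun n : ℕ => θ ^ n * catalan n) atTop (𝓝 0) := by
  refine squeeze_zero_norm (fun n => ?_) tendsto_one_div_add_atTop_nhds_zero_nat
  calc ‖θ ^ n * catalan n‖ = |θ| ^ n * catalan n := by
        rw [norm_mul, norm_pow, Real.norm_eq_abs, Real.norm_natCast]
    _ ≤ (1 / 4) ^ n * (4 ^ n / (n + 1)) := by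
        gcongr
        exact catalan_le_four_pow_div n
    _ = 1 / (n + 1) := by
        rw [← mul_div_assoc, ← mul_pow]
        norm_num

theorem stmt_15 (θ : ℝ) (hθ : |θ| ≤ 1 / 4) :
    Filter.Tendsto
      (fun k : ℕ => θ ^ (k + 1) * (Nat.factorial (2 * k + 2) : ℝ) /
        ((Nat.factorial (k + 1) : ℝ) * (Nat.factorial (k + 2) : ℝ)))
      Filter.atTop (nhds 0) := by
  refine ((tendsto_pow_mul_catalan hθ).comp (tendsto_add_atTop_nat 1)).congr fun k => ?_
  rw [Function.comp_apply, ← cast_factorial_two_mul_div_eq_catalan, mul_div_assoc]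
  rfl
end

section
/- Let r, ε, u0 be real numbers with 0 ≤ r < 1, ε ≥ 0, u0 ≥ 0, and set θ = r·ε·u0/(1−r)². Assume θ ≤ 1/4. Define U : ℕ → ℝ by U(0) = u0 and U(n+1) = u0 + r·(1 + ε·U(n))·U(n). Then U(n) converges as n → ∞, with limit (u0/(1−r))·(1 + 4θ/(1+√(1−4θ))²). -/
/-! The map `f x = u0 + r (1 + ε x) x` is increasing on `[0, ∞)` and its smaller fixed point is
`T = 2 u0 / ((1 - r)(1 + √(1 - 4θ)))`, which is the limit in the statement. Since `u0 ≤ f u0`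
and `u0 ≤ T`, the Picard iterates increase and stay below `T`, so they converge to a fixed point
in `[u0, T]`. Writing `f x - x = (x - T)(r + r ε (x + T) - 1)` and `2 r ε T = (1 - r)(1 - √(1 - 4θ))`,
the second factor is negative for `x < T`, so `T` is the only such fixed point. -/

open Filter Set Topology

section OrderTopology

variable {α : Type*} [ConditionallyCompleteLinearOrder α] [TopologicalSpace α] [OrderTopology α]

theorem tendsto_iterate_of_monotoneOn_Icc {f : α → α} {a T : α}
    (hmono : MonotoneOn f (Icc a T)) (hcont : ContinuousOn f (Icc a T))
    (haT : a ≤ T) (ha : a ≤ f a) (hT : f T = T)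
    (huniq : ∀ x ∈ Icc a T, f x = x → x = T) :
    Tendsto (fun n => f^[n] a) atTop (𝓝 T) := by
  set x : ℕ → α := fun n => f^[n] a
  have hsucc : ∀ n, x (n + 1) = f (x n) := fun n => Function.iterate_succ_apply' f n a
  have hmem : ∀ n, x n ∈ Icc a T := by
    intro n
    induction n with
    | zero => exact ⟨le_rfl, haT⟩
    | succ n ih =>
      rw [hsucc]
      exact ⟨ha.trans (hmono ⟨le_rfl, haT⟩ ih ih.1),
        hT ▸ hmono ih ⟨haT, le_rfl⟩ ih.2⟩
  have hx_mono : Monotone x := by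
    refine monotone_nat_of_le_succ fun n => ?_
    induction n with
    | zero => exact hsucc 0 ▸ ha
    | succ n ih =>
      simpa only [hsucc] using hmono (hmem n) (hmem (n + 1)) ih
  have hlim : Tendsto x atTop (𝓝 (⨆ n, x n)) :=
    tendsto_atTop_ciSup hx_mono ⟨T, forall_mem_range.2 fun n => (hmem n).2⟩
  have hc : (⨆ n, x n) ∈ Icc a T :=
    isClosed_Icc.mem_of_tendsto hlim (Eventually.of_forall hmem)
  have hlim_within : Tendsto x atTop (𝓝[Icc a T] (⨆ n, x n)) :=
    tendsto_nhdsWithin_iff.2 ⟨hlim, Eventually.of_forall hmem⟩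
  have hfix : f (⨆ n, x n) = ⨆ n, x n := by
    refine tendsto_nhds_unique ((hcont _ hc).tendsto.comp hlim_within) ?_
    simpa only [Function.comp_def, ← hsucc] using hlim.comp (tendsto_add_atTop_nat 1)
  rwa [← huniq _ hc hfix]

end OrderTopology

def picardMap (r ε u0 x : ℝ) : ℝ := u0 + r * (1 + ε * x) * x

section PicardMap

variable {r ε u0 s : ℝ}

theorem picardMap_sub (x y : ℝ) :
    picardMap r ε u0 x - picardMap r ε u0 y = (x - y) * (r + r * ε * (x + y)) := by
  unfold picardMap; ring

theorem monotoneOn_picardMap (hr : 0 ≤ r) (hε : 0 ≤ ε) : MonotoneOn (picardMap r ε u0) (Ici 0) := by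
  intro x hx y hy hxy
  rw [← sub_nonneg, picardMap_sub]
  have hxy0 : (0 : ℝ) ≤ y + x := add_nonneg hy hx
  exact mul_nonneg (sub_nonneg.2 hxy) (by positivity)

theorem self_le_picardMap (hr : 0 ≤ r) (hε : 0 ≤ ε) (hu0 : 0 ≤ u0) : u0 ≤ picardMap r ε u0 u0 := by
  unfold picardMap
  have : 0 ≤ r * (1 + ε * u0) * u0 := by positivity
  linarith

theorem picardMap_iterate {U : ℕ → ℝ} (hU0 : U 0 = u0)
    (hUs : ∀ n : ℕ, U (n + 1) = u0 + r * (1 + ε * U n) * U n) :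
    U = fun n => (picardMap r ε u0)^[n] u0 := by
  funext n
  induction n with
  | zero => exact hU0
  | succ n ih => rw [hUs, ih, Function.iterate_succ_apply']; rfl

/-! In the lemmas below `s` plays the role of `√(1 - 4θ)`, and `hs` is `s ^ 2 = 1 - 4θ` multiplied
by `(1 - r) ^ 2`. -/

theorem picardMap_fixedPt (hr : r < 1) (hs0 : 0 ≤ s)
    (hs : (1 - r) ^ 2 * s ^ 2 = (1 - r) ^ 2 - 4 * (r * ε * u0)) :
    picardMap r ε u0 (2 * u0 / ((1 - r) * (1 + s))) = 2 * u0 / ((1 - r) * (1 + s)) := by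
  have : 1 - r ≠ 0 := by linarith
  have : 1 + s ≠ 0 := by linarith
  unfold picardMap
  field_simp
  linear_combination u0 * hs

theorem two_mul_mul_picardFixedPt (hr : r < 1) (hs0 : 0 ≤ s)
    (hs : (1 - r) ^ 2 * s ^ 2 = (1 - r) ^ 2 - 4 * (r * ε * u0)) :
    2 * (r * ε) * (2 * u0 / ((1 - r) * (1 + s))) = (1 - r) * (1 - s) := by
  have : 1 - r ≠ 0 := by linarith
  have : 1 + s ≠ 0 := by linarith
  field_simp
  linear_combination hs

theorem le_picardFixedPt (hr0 : 0 ≤ r) (hr1 : r < 1) (hu0 : 0 ≤ u0) (hs0 : 0 ≤ s) (hs1 : s ≤ 1) :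
    u0 ≤ 2 * u0 / ((1 - r) * (1 + s)) := by
  rw [le_div_iff₀ (by nlinarith)]
  nlinarith [mul_nonneg hu0 (sub_nonneg.2 hs1), mul_nonneg (mul_nonneg hr0 hu0) hs0]

theorem eq_picardFixedPt_of_fixed (hr0 : 0 ≤ r) (hr1 : r < 1) (hε : 0 ≤ ε) (hs0 : 0 ≤ s)
    (hs : (1 - r) ^ 2 * s ^ 2 = (1 - r) ^ 2 - 4 * (r * ε * u0)) {x : ℝ}
    (hx : x ≤ 2 * u0 / ((1 - r) * (1 + s))) (hfix : picardMap r ε u0 x = x) :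
    x = 2 * u0 / ((1 - r) * (1 + s)) := by
  have hfixT := picardMap_fixedPt hr1 hs0 hs
  have h2T := two_mul_mul_picardFixedPt hr1 hs0 hs
  set T := 2 * u0 / ((1 - r) * (1 + s))
  have hdiff := picardMap_sub (r := r) (ε := ε) (u0 := u0) x T
  rw [hfix, hfixT] at hdiff
  -- `1 - r - r ε (x + T) = (1 - r) s + r ε (T - x)`, a sum of two nonnegative terms
  have hfactor : (T - x) * ((1 - r) * s + r * ε * (T - x)) = 0 := by
    linear_combination (-1 : ℝ) * hdiff + (T - x) * h2T
  rcases mul_eq_zero.1 hfactor with h | h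
  · linarith
  · by_contra hne
    have hTx : 0 < T - x := sub_pos.2 (lt_of_le_of_ne hx hne)
    have h1 : 0 ≤ (1 - r) * s := mul_nonneg (by linarith) hs0
    have h2 : 0 ≤ r * ε * (T - x) := mul_nonneg (mul_nonneg hr0 hε) hTx.le
    have hs_zero : s = 0 := (mul_eq_zero.1 (by linarith : (1 - r) * s = 0)).resolve_left (by linarith)
    have hrε : r * ε = 0 := (mul_eq_zero.1 (by linarith : r * ε * (T - x) = 0)).resolve_right hTx.ne'
    rw [hs_zero, hrε] at hs
    nlinarith

end PicardMap

theorem limit_eq_picardFixedPt {r u0 θ s : ℝ} (hr : r < 1) (hs0 : 0 ≤ s) (hs : s ^ 2 = 1 - 4 * θ) :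
    (u0 / (1 - r)) * (1 + 4 * θ / (1 + s) ^ 2) = 2 * u0 / ((1 - r) * (1 + s)) := by
  have : 1 - r ≠ 0 := by linarith
  have : 1 + s ≠ 0 := by linarith
  rw [show 4 * θ = 1 - s ^ 2 by linarith]
  field_simp
  ring

theorem stmt_16 (r ε u0 θ : ℝ)
    (hr0 : 0 ≤ r) (hr1 : r < 1) (hε : 0 ≤ ε) (hu0 : 0 ≤ u0)
    (hθdef : θ = r * ε * u0 / (1 - r) ^ 2) (hθ : θ ≤ 1 / 4)
    (U : ℕ → ℝ) (hU0 : U 0 = u0)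
    (hUs : ∀ n : ℕ, U (n + 1) = u0 + r * (1 + ε * U n) * U n) :
    Filter.Tendsto U Filter.atTop
      (nhds ((u0 / (1 - r)) * (1 + 4 * θ / (1 + Real.sqrt (1 - 4 * θ)) ^ 2))) := by
  set s := Real.sqrt (1 - 4 * θ)
  have hs0 : 0 ≤ s := Real.sqrt_nonneg _
  have hs2 : s ^ 2 = 1 - 4 * θ := Real.sq_sqrt (by linarith)
  have h1r : 0 < 1 - r := by linarith
  have hs : (1 - r) ^ 2 * s ^ 2 = (1 - r) ^ 2 - 4 * (r * ε * u0) := by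
    rw [hs2, hθdef]; field_simp
  have hθ0 : 0 ≤ θ := by rw [hθdef]; positivity
  have hs1 : s ≤ 1 := by nlinarith
  have hu0T := le_picardFixedPt hr0 hr1 hu0 hs0 hs1
  rw [limit_eq_picardFixedPt hr1 hs0 hs2, picardMap_iterate hU0 hUs]
  refine tendsto_iterate_of_monotoneOn_Icc
    ((monotoneOn_picardMap hr0 hε).mono fun x hx => hu0.trans hx.1)
    (by unfold picardMap; fun_prop) hu0T (self_le_picardMap hr0 hε hu0)
    (picardMap_fixedPt hr1 hs0 hs) fun x hx => eq_picardFixedPt_of_fixed hr0 hr1 hε hs0 hs hx.2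
end

section
/- Let r, ε, u0 be real numbers with 0 < r < 1, ε > 0, u0 > 0, and assume r·ε·u0/(1−r)² > 1/4. Define U : ℕ → ℝ by U(0) = u0 and U(n+1) = u0 + r·(1 + ε·U(n))·U(n). Then U(n) tends to +∞ as n → ∞; i.e., the explicit Discrete Picard Iteration is unstable when the nonlinear stability number exceeds 1/4. -/
theorem stmt_17 (r ε u0 : ℝ)
    (hr0 : 0 < r) (hr1 : r < 1) (hε : 0 < ε) (hu0 : 0 < u0)
    (hθ : r * ε * u0 / (1 - r) ^ 2 > 1 / 4)
    (U : ℕ → ℝ) (hU0 : U 0 = u0)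
    (hUs : ∀ n : ℕ, U (n + 1) = u0 + r * (1 + ε * U n) * U n) :
    Filter.Tendsto U Filter.atTop Filter.atTop := by
  set δ : ℝ := u0 - (1 - r) ^ 2 / (4 * r * ε) with hδdef
  have hsq : (0:ℝ) < (1 - r) ^ 2 := pow_pos (by linarith) 2
  have hδ : 0 < δ := by
    rw [gt_iff_lt, div_lt_div_iff₀ (by norm_num) hsq] at hθ
    rw [hδdef, sub_pos, div_lt_iff₀ (by positivity)]
    nlinarith
  have key : ∀ n : ℕ, u0 + n * δ ≤ U n := by
    intro n
    induction n with
    | zero => simp [hU0]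
    | succ n ih =>
      have h1 : U n + δ ≤ U (n + 1) := by
        rw [hUs n]
        have h2 : 0 ≤ (2 * r * ε * U n - (1 - r)) ^ 2 := sq_nonneg _
        have h3 : (0:ℝ) < 4 * r * ε := by positivity
        have h4 : (1 - r) ^ 2 / (4 * r * ε) * (4 * r * ε) = (1 - r) ^ 2 :=
          div_mul_cancel₀ _ (ne_of_gt h3)
        rw [hδdef]
        nlinarith
      push_cast
      linarith
  refine Filter.tendsto_atTop_mono key ?_
  have h : Filter.Tendsto (fun n : ℕ => (n : ℝ) * δ) Filter.atTop Filter.atTop :=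
    tendsto_natCast_atTop_atTop.atTop_mul_const hδ
  exact Filter.tendsto_atTop_add_const_left _ u0 h
end

section
/- Let Z ≥ 1 be a natural number and r, ε, u0 real numbers with 0 < r < 1, ε > 0, u0 > 0, and assume r·ε·u0^Z/(1−r)^(Z+1) > Z^Z/(Z+1)^(Z+1). Define U : ℕ → ℝ by U(0) = u0 and U(n+1) = u0 + r·(1 + ε·U(n)^Z)·U(n). Then U(n) tends to +∞ as n → ∞; i.e., the explicit Discrete Picard Iteration with polynomial nonlinearity of degree Z+1 is unstable when its nonlinear stability number exceeds Z^Z/(Z+1)^(Z+1). -/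
lemma amgm_pow19 (n : ℕ) (a b : ℝ) (ha : 0 ≤ a) (hb : 0 ≤ b) :
    ((n : ℝ) + 1) * (a * b ^ n) ≤ a ^ (n + 1) + (n : ℝ) * b ^ (n + 1) := by
  induction n with
  | zero => simp
  | succ n ih =>
    have key : a * b ^ (n+1) + a ^ (n+1) * b ≤ a ^ (n+2) + b ^ (n+2) := by
      rcases le_total a b with h | h
      · have h1 : a ^ (n+1) ≤ b ^ (n+1) := pow_le_pow_left₀ ha h _
        have h2 : 0 ≤ b ^ (n+1) - a ^ (n+1) := by linarith
        have h3 : 0 ≤ b - a := by linarith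
        nlinarith [mul_nonneg h2 h3, pow_succ a (n+1), pow_succ b (n+1)]
      · have h1 : b ^ (n+1) ≤ a ^ (n+1) := pow_le_pow_left₀ hb h _
        have h2 : 0 ≤ a ^ (n+1) - b ^ (n+1) := by linarith
        have h3 : 0 ≤ a - b := by linarith
        nlinarith [mul_nonneg h2 h3, pow_succ a (n+1), pow_succ b (n+1)]
    have ih' : ((n:ℝ)+1) * (a * b^n) * b ≤ (a^(n+1) + n * b^(n+1)) * b :=
      mul_le_mul_of_nonneg_right ih hb
    push_cast
    simp only [pow_succ] at ih' key ⊢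
    ring_nf at ih' key ⊢
    linarith

theorem stmt_19 (Z : ℕ) (hZ : 1 ≤ Z) (r ε u0 : ℝ)
    (hr0 : 0 < r) (hr1 : r < 1) (hε : 0 < ε) (hu0 : 0 < u0)
    (hθ : r * ε * u0 ^ Z / (1 - r) ^ (Z + 1) > (Z : ℝ) ^ Z / ((Z : ℝ) + 1) ^ (Z + 1))
    (U : ℕ → ℝ) (hU0 : U 0 = u0)
    (hUs : ∀ n : ℕ, U (n + 1) = u0 + r * (1 + ε * U n ^ Z) * U n) :
    Filter.Tendsto U Filter.atTop Filter.atTop := by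
  have h1r : (0:ℝ) < 1 - r := by linarith
  have hZ0 : (0:ℝ) < (Z:ℝ) := by exact_mod_cast Nat.lt_of_lt_of_le Nat.zero_lt_one hZ
  have hZ1 : (0:ℝ) < (Z:ℝ) + 1 := by linarith
  have hrε : (0:ℝ) < r * ε * ((Z:ℝ)+1) := by positivity
  set c : ℝ := (1 - r) / (r * ε * ((Z:ℝ)+1)) with hc
  have hcpos : 0 < c := div_pos h1r hrε
  set x : ℝ := c ^ ((Z:ℝ)⁻¹) with hx
  have hxpos : 0 < x := Real.rpow_pos_of_pos hcpos _
  have hxZ : x ^ Z = c := by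
    rw [hx, ← Real.rpow_natCast (c ^ ((Z:ℝ)⁻¹)) Z, ← Real.rpow_mul hcpos.le,
      inv_mul_cancel₀ (ne_of_gt hZ0), Real.rpow_one]
  have hfix : r * ε * ((Z:ℝ)+1) * x ^ Z = 1 - r := by
    rw [hxZ, hc]; field_simp
  -- the key strict inequality from hθ
  have hθ'' : (Z:ℝ) ^ Z * (1 - r) ^ (Z+1) < r * ε * u0 ^ Z * ((Z:ℝ)+1) ^ (Z+1) :=
    (div_lt_div_iff₀ (by positivity) (by positivity)).mp hθ
  have hθ' : ((1-r) * (Z:ℝ) / ((Z:ℝ)+1) * x) ^ Z < u0 ^ Z := by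
    rw [mul_pow, hxZ, hc]
    have E : ((1-r) * (Z:ℝ) / ((Z:ℝ)+1)) ^ Z * ((1 - r) / (r * ε * ((Z:ℝ)+1)))
        = ((Z:ℝ) ^ Z * (1-r) ^ (Z+1)) / (r * ε * ((Z:ℝ)+1) ^ (Z+1)) := by
      rw [div_pow, mul_pow, div_mul_div_comm,
        div_eq_div_iff (by positivity) (by positivity)]
      ring
    rw [E, div_lt_iff₀ (by positivity)]
    nlinarith [hθ'']
  set δ : ℝ := u0 - (1-r) * (Z:ℝ) / ((Z:ℝ)+1) * x with hδdef
  have hδ : 0 < δ := by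
    by_contra h
    push_neg at h
    have hle : u0 ≤ (1-r) * (Z:ℝ) / ((Z:ℝ)+1) * x := by
      simp only [hδdef] at h; linarith
    have := pow_le_pow_left₀ hu0.le hle Z
    linarith
  have hw : (1-r) * (Z:ℝ) / ((Z:ℝ)+1) * x = r * ε * (Z:ℝ) * (x ^ Z * x) := by
    rw [← hfix]; field_simp
  -- one-step increase
  have step : ∀ y : ℝ, 0 ≤ y → y + δ ≤ u0 + r * (1 + ε * y ^ Z) * y := by
    intro y hy
    have hAM := amgm_pow19 Z y x hy hxpos.le
    have key : (1-r) * y ≤ r * ε * (y ^ Z * y) + r * ε * (Z:ℝ) * (x ^ Z * x) := by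
      calc (1-r) * y = r * ε * (((Z:ℝ)+1) * (y * x ^ Z)) := by rw [← hfix]; ring
        _ ≤ r * ε * (y ^ (Z+1) + (Z:ℝ) * x ^ (Z+1)) :=
            mul_le_mul_of_nonneg_left hAM (by positivity)
        _ = r * ε * (y ^ Z * y) + r * ε * (Z:ℝ) * (x ^ Z * x) := by
            rw [pow_succ, pow_succ]; ring
    have expand : u0 + r * (1 + ε * y ^ Z) * y = u0 + r * y + r * ε * (y ^ Z * y) := by ring
    rw [expand, hδdef, hw]
    linarith
  -- lower bound U n ≥ u0 + n δ
  have hlow : ∀ n : ℕ, u0 + (n:ℝ) * δ ≤ U n := by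
    intro n
    induction n with
    | zero => simp [hU0]
    | succ n ih =>
      have hUn : 0 ≤ U n := by
        have : (0:ℝ) ≤ (n:ℝ) * δ := by positivity
        linarith
      have := step (U n) hUn
      rw [hUs n]
      push_cast
      linarith
  have htend : Filter.Tendsto (fun n : ℕ => u0 + (n:ℝ) * δ) Filter.atTop Filter.atTop := by
    apply Filter.tendsto_atTop_add_const_left
    exact Filter.Tendsto.atTop_mul_const hδ tendsto_natCast_atTop_atTop
  exact Filter.tendsto_atTop_mono hlow htend
end
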